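/- Let A ∈ M_m(K), and let (r,s) be the position of a marked entry of A that is minimal with respect to the ordering by row numbers (i.e. r ≤ r′ for every marked position (r′,s′) of A). Then there exist an invertible lower triangular matrix C ∈ GL_m(K) whose off-diagonal entries in the r-th row are all zero (C_{rk} = 0 for k ≠ r) and an upper triangular matrix D ∈ M_m(K) with Dᵢᵢ = Cᵢᵢ⁻¹ for all i and whose off-diagonal entries in the s-th column are all zero (D_{ls} = 0 for l ≠ s), such that B = C A D satisfies B_{rj} = 0 for all j ≠ s and B_{is} = 0 for all i ≠ r. -/

import Mathlib

open Matrix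

/-- An entry of `A` at position `(r,s)` is *marked* if it is nonzero and all other
entries `A i j` with `i ≤ r`, `j ≤ s` vanish. -/
def Marked {K : Type*} [Field K] {m : ℕ} (A : Matrix (Fin m) (Fin m) K)
    (r s : Fin m) : Prop :=
  A r s ≠ 0 ∧ ∀ i j : Fin m, i ≤ r → j ≤ s → (i, j) ≠ (r, s) → A i j = 0

/-!
Left multiplication by `C = colClearing A r s` subtracts `A i s / A r s` times row `r` from
every other row `i`, which clears column `s` outside the pivot; right multiplication by
`D = rowClearing A r s` does the same with columns and clears row `r`. As `C` only differs
from `1` in column `r` and `D` only in row `s`, the two operations do not disturb each other,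
and both have unit diagonal. Since `(r,s)` is marked, `A i s = 0` for `i < r` and `A r j = 0`
for `j < s`, so `C` is lower and `D` upper triangular.
-/

namespace Matrix

theorem det_updateCol_one {R n : Type*} [CommRing R] [Fintype n] [DecidableEq n] (r : n)
    (c : n → R) : (updateCol (1 : Matrix n n R) r c).det = c r := by
  simpa [one_apply] using det_updateCol_sum (1 : Matrix n n R) r c

variable {K : Type*} [Field K] {n : Type*} [DecidableEq n]

def colClearing (A : Matrix n n K) (r s : n) : Matrix n n K :=
  updateCol 1 r fun i => if i = r then 1 else -(A i s / A r s)

def rowClearing (A : Matrix n n K) (r s : n) : Matrix n n K :=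
  (colClearing Aᵀ s r)ᵀ

variable (A : Matrix n n K) (r s : n)

theorem rowClearing_transpose : rowClearing Aᵀ s r = (colClearing A r s)ᵀ := by
  rw [rowClearing, transpose_transpose]

theorem colClearing_apply_diag (i : n) : colClearing A r s i i = 1 := by
  by_cases hi : i = r
  · subst hi
    simp [colClearing]
  · simp [colClearing, updateCol_ne hi]

theorem colClearing_apply_row_of_ne {k : n} (hk : k ≠ r) : colClearing A r s r k = 0 := by
  simp [colClearing, updateCol_ne hk, one_apply_ne hk.symm]

theorem colClearing_apply_of_lt [Preorder n] (hA : ∀ i < r, A i s = 0) {i j : n} (hij : i < j) :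
    colClearing A r s i j = 0 := by
  by_cases hj : j = r
  · subst hj
    simp [colClearing, hA i hij, hij.ne]
  · simp [colClearing, updateCol_ne hj, one_apply_ne hij.ne]

theorem isUnit_colClearing [Fintype n] : IsUnit (colClearing A r s) := by
  simp [isUnit_iff_isUnit_det, colClearing, det_updateCol_one]

theorem colClearing_mul_apply_row [Fintype n] (M : Matrix n n K) (j : n) :
    (colClearing A r s * M) r j = M r j := by
  rw [mul_apply, Fintype.sum_eq_single r]
  · simp [colClearing_apply_diag]
  · intro k hk
    simp [colClearing_apply_row_of_ne A r s hk]

theorem colClearing_mul_apply_of_ne [Fintype n] (M : Matrix n n K) {i : n} (hi : i ≠ r) (j : n) :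
    (colClearing A r s * M) i j = M i j - A i s / A r s * M r j := by
  rw [mul_apply, Fintype.sum_eq_add i r hi]
  · rw [colClearing_apply_diag, colClearing, updateCol_self, if_neg hi]
    ring
  · rintro k ⟨hki, hkr⟩
    simp [colClearing, updateCol_ne hkr, one_apply_ne hki.symm]

theorem colClearing_mul_self_apply_col [Fintype n] (h : A r s ≠ 0) {i : n} (hi : i ≠ r) :
    (colClearing A r s * A) i s = 0 := by
  rw [colClearing_mul_apply_of_ne A r s A hi, div_mul_cancel₀ _ h, sub_self]

theorem rowClearing_apply_diag (i : n) : rowClearing A r s i i = 1 :=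
  colClearing_apply_diag Aᵀ s r i

theorem rowClearing_apply_col_of_ne {l : n} (hl : l ≠ s) : rowClearing A r s l s = 0 :=
  colClearing_apply_row_of_ne Aᵀ s r hl

theorem rowClearing_apply_of_lt [Preorder n] (hA : ∀ j < s, A r j = 0) {i j : n} (hji : j < i) :
    rowClearing A r s i j = 0 :=
  colClearing_apply_of_lt Aᵀ s r hA hji

theorem mul_rowClearing_apply_col [Fintype n] (M : Matrix n n K) (i : n) :
    (M * rowClearing A r s) i s = M i s := by
  have hM : M * rowClearing A r s = (colClearing Aᵀ s r * Mᵀ)ᵀ := by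
    rw [rowClearing, transpose_mul, transpose_transpose]
  rw [hM, transpose_apply, colClearing_mul_apply_row, transpose_apply]

theorem colClearing_mul_mul_rowClearing_apply_col [Fintype n] (h : A r s ≠ 0) {i : n}
    (hi : i ≠ r) : (colClearing A r s * A * rowClearing A r s) i s = 0 := by
  rw [mul_rowClearing_apply_col, colClearing_mul_self_apply_col A r s h hi]

theorem colClearing_mul_mul_rowClearing_apply_row [Fintype n] (h : A r s ≠ 0) {j : n}
    (hj : j ≠ s) : (colClearing A r s * A * rowClearing A r s) r j = 0 := by
  rw [← transpose_apply (colClearing A r s * A * rowClearing A r s), transpose_mul, transpose_mul,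
    ← mul_assoc, ← rowClearing_transpose, rowClearing]
  exact colClearing_mul_mul_rowClearing_apply_col Aᵀ s r h hj

end Matrix

section Marked

variable {K : Type*} [Field K] {m : ℕ} {A : Matrix (Fin m) (Fin m) K} {r s : Fin m}

theorem Marked.apply_of_lt_row (h : Marked A r s) {i : Fin m} (hi : i < r) : A i s = 0 :=
  h.2 i s hi.le le_rfl fun he => hi.ne (Prod.ext_iff.mp he).1

theorem Marked.apply_of_lt_col (h : Marked A r s) {j : Fin m} (hj : j < s) : A r j = 0 :=
  h.2 r j le_rfl hj.le fun he => hj.ne (Prod.ext_iff.mp he).2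

end Marked

theorem stmt_9_general {K : Type*} [Field K] {m : ℕ}
    (A : Matrix (Fin m) (Fin m) K) (r s : Fin m) (hrs : Marked A r s) :
    ∃ C D : Matrix (Fin m) (Fin m) K,
      IsUnit C ∧ (∀ i j : Fin m, i < j → C i j = 0) ∧
      (∀ k : Fin m, k ≠ r → C r k = 0) ∧
      (∀ i j : Fin m, j < i → D i j = 0) ∧
      (∀ i : Fin m, D i i = (C i i)⁻¹) ∧
      (∀ l : Fin m, l ≠ s → D l s = 0) ∧
      (∀ j : Fin m, j ≠ s → (C * A * D) r j = 0) ∧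
      (∀ i : Fin m, i ≠ r → (C * A * D) i s = 0) :=
  ⟨colClearing A r s, rowClearing A r s, isUnit_colClearing A r s,
    fun _ _ => colClearing_apply_of_lt A r s fun _ => hrs.apply_of_lt_row,
    fun _ => colClearing_apply_row_of_ne A r s,
    fun _ _ => rowClearing_apply_of_lt A r s fun _ => hrs.apply_of_lt_col,
    fun i => by rw [rowClearing_apply_diag, colClearing_apply_diag, inv_one],
    fun _ => rowClearing_apply_col_of_ne A r s,
    fun _ => colClearing_mul_mul_rowClearing_apply_row A r s hrs.1,
    fun _ => colClearing_mul_mul_rowClearing_apply_col A r s hrs.1⟩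

/-- Lemma 3.6: for a row-minimal marked entry, the clearing transformation of
Lemma 3.4 can be chosen with all off-diagonal entries of the `r`-th row of `C`
and of the `s`-th column of `D` equal to zero. -/
theorem stmt_9 {K : Type*} [Field K] {m : ℕ}
    (A : Matrix (Fin m) (Fin m) K) (r s : Fin m) (hrs : Marked A r s)
    (hmin : ∀ r' s' : Fin m, Marked A r' s' → r ≤ r') :
    ∃ C D : Matrix (Fin m) (Fin m) K,
      IsUnit C ∧ (∀ i j : Fin m, i < j → C i j = 0) ∧
      (∀ k : Fin m, k ≠ r → C r k = 0) ∧
      (∀ i j : Fin m, j < i → D i j = 0) ∧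
      (∀ i : Fin m, D i i = (C i i)⁻¹) ∧
      (∀ l : Fin m, l ≠ s → D l s = 0) ∧
      (∀ j : Fin m, j ≠ s → (C * A * D) r j = 0) ∧
      (∀ i : Fin m, i ≠ r → (C * A * D) i s = 0) :=
  stmt_9_general A r s hrs
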